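/- arXiv:2212.05252 — 3 statements merged into one kernel-verified Lean document; each statement's English description precedes it below -/
import Mathlib

section
/- For p ≥ 0, e^{-x} ∑_{n=1}^∞ ( ∑_{j=0}^{n-1} (j+r)_{p,λ} ) x^n/n! = ∫_0^x φ_{p,λ}^{(r)}(t) dt. -/
/-- Generalized falling factorial `(y)_{m,λ} = y(y-λ)⋯(y-(m-1)λ)`. -/
noncomputable def degFallFact (y l : ℝ) (m : ℕ) : ℝ :=
  ∏ i ∈ Finset.range m, (y - i * l)

/-- Degenerate r-Bell polynomial via the Dobinski-like formula
`φ_{p,λ}^{(r)}(x) = e^{-x} ∑_{k≥0} (k+r)_{p,λ} x^k/k!`. -/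
noncomputable def degBell (l : ℝ) (p r : ℕ) (x : ℝ) : ℝ :=
  Real.exp (-x) * ∑' k : ℕ, degFallFact (k + r) l p * x ^ k / k.factorial

/-!
Write `S n = ∑_{j<n} (j+r)_{p,λ}`. Since `S (n+1) - S n = (n+r)_{p,λ}`, differentiating
`e^{-x} ∑ S n x^n/n!` termwise gives exactly `φ_{p,λ}^{(r)}(x)`, and the left-hand side vanishes at
`x = 0`; the identity is then the fundamental theorem of calculus. Termwise differentiation is
legitimate because the coefficients `(j+r)_{p,λ}`, and hence `S n`, grow at most exponentially.
-/

noncomputable def egf (c : ℕ → ℝ) (x : ℝ) : ℝ :=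
  ∑' n, c n * x ^ n / n.factorial

section Egf

variable {c : ℕ → ℝ} {C K : ℝ}

theorem norm_egf_term_le (hc : ∀ n, |c n| ≤ C * K ^ n) {x R : ℝ} (hx : |x| ≤ R) (n : ℕ) :
    ‖c n * x ^ n / n.factorial‖ ≤ C * ((K * R) ^ n / n.factorial) := by
  have hCK : 0 ≤ C * K ^ n := (abs_nonneg _).trans (hc n)
  rw [Real.norm_eq_abs, abs_div, abs_mul, abs_pow, Nat.abs_cast, mul_pow, ← mul_div_assoc,
    ← mul_assoc]
  gcongr
  exact hc n

theorem abs_succ_le (hc : ∀ n, |c n| ≤ C * K ^ n) (n : ℕ) : |c (n + 1)| ≤ C * K * K ^ n := by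
  rw [mul_assoc, ← pow_succ']
  exact hc _

theorem summable_egf (hc : ∀ n, |c n| ≤ C * K ^ n) (x : ℝ) :
    Summable fun n ↦ c n * x ^ n / n.factorial :=
  .of_norm_bounded ((Real.summable_pow_div_factorial _).mul_left C)
    (norm_egf_term_le hc le_rfl)

theorem egf_zero (c : ℕ → ℝ) : egf c 0 = c 0 := by
  rw [egf, tsum_eq_single 0 fun n hn ↦ by simp [hn]]
  simp

theorem hasDerivAt_pow_succ_div_factorial (n : ℕ) (y : ℝ) :
    HasDerivAt (fun y : ℝ ↦ y ^ (n + 1) / ((n + 1).factorial : ℝ)) (y ^ n / n.factorial) y := by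
  refine ((hasDerivAt_pow (n + 1) y).div_const ((n + 1).factorial : ℝ)).congr_deriv ?_
  rw [Nat.factorial_succ, Nat.cast_mul, Nat.add_sub_cancel, mul_div_mul_left]
  positivity

theorem hasDerivAt_egf (hc : ∀ n, |c n| ≤ C * K ^ n) (x : ℝ) :
    HasDerivAt (egf c) (egf (fun n ↦ c (n + 1)) x) x := by
  have hsplit : egf c = fun y ↦ c 0 + ∑' n, c (n + 1) * (y ^ (n + 1) / (n + 1).factorial) := by
    funext y
    rw [egf, (summable_egf hc y).tsum_eq_zero_add]
    simp [mul_div_assoc]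
  have hx : x ∈ Metric.ball (0 : ℝ) (|x| + 1) := by simp
  rw [hsplit]
  refine .const_add _ (hasDerivAt_tsum_of_isPreconnected
    (g' := fun n y ↦ c (n + 1) * y ^ n / n.factorial)
    ((Real.summable_pow_div_factorial (K * (|x| + 1))).mul_left (C * K))
    Metric.isOpen_ball (convex_ball _ _).isPreconnected (fun n y _ ↦ ?_) (fun n y hy ↦ ?_) hx
    ?_ hx)
  · simpa [mul_div_assoc] using (hasDerivAt_pow_succ_div_factorial n y).const_mul (c (n + 1))
  · rw [Metric.mem_ball, dist_zero_right, Real.norm_eq_abs] at hy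
    exact norm_egf_term_le (abs_succ_le hc) hy.le n
  · simpa [mul_div_assoc] using (summable_nat_add_iff 1).mpr (summable_egf hc x)

theorem hasDerivAt_exp_neg_mul_egf (hc : ∀ n, |c n| ≤ C * K ^ n) (x : ℝ) :
    HasDerivAt (fun y ↦ Real.exp (-y) * egf c y)
      (Real.exp (-x) * egf (fun n ↦ c (n + 1) - c n) x) x := by
  have hsub : egf (fun n ↦ c (n + 1) - c n) x = egf (fun n ↦ c (n + 1)) x - egf c x := by
    rw [egf, egf, egf, ← (summable_egf (abs_succ_le hc) x).tsum_sub (summable_egf hc x)]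
    congr 1; funext n; ring
  refine (((Real.hasDerivAt_exp _).comp x (hasDerivAt_neg x)).mul
    (hasDerivAt_egf hc x)).congr_deriv ?_
  rw [hsub, Function.comp_apply]; ring

theorem abs_sum_range_le (hc : ∀ n, |c n| ≤ C * K ^ n) (hK : 1 ≤ K) (n : ℕ) :
    |∑ j ∈ Finset.range n, c j| ≤ C * (2 * K) ^ n := by
  have hC : 0 ≤ C := by simpa using (abs_nonneg _).trans (hc 0)
  calc |∑ j ∈ Finset.range n, c j| ≤ ∑ j ∈ Finset.range n, |c j| := Finset.abs_sum_le_sum_abs _ _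
    _ ≤ ∑ _j ∈ Finset.range n, C * K ^ n := Finset.sum_le_sum fun j hj ↦
        (hc j).trans (by gcongr; exact (Finset.mem_range.mp hj).le)
    _ = n * (C * K ^ n) := by rw [Finset.sum_const, Finset.card_range, nsmul_eq_mul]
    _ ≤ 2 ^ n * (C * K ^ n) := by gcongr; exact_mod_cast n.lt_two_pow_self.le
    _ = C * (2 * K) ^ n := by ring

end Egf

theorem abs_degFallFact_le (y l : ℝ) (m : ℕ) : |degFallFact y l m| ≤ (|y| + m * |l|) ^ m := by
  rw [degFallFact, Finset.abs_prod]
  refine (Finset.prod_le_prod (fun _ _ ↦ abs_nonneg _) fun i hi ↦ ?_).trans_eq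
    (by rw [Finset.prod_const, Finset.card_range])
  calc |y - i * l| ≤ |y| + i * |l| := by simpa [abs_mul] using abs_sub y (i * l)
    _ ≤ |y| + m * |l| := by gcongr; exact (Finset.mem_range.mp hi).le

theorem abs_degFallFact_nat_add_le (l : ℝ) (p r j : ℕ) :
    |degFallFact (j + r) l p| ≤ (r + p * |l| + 1) ^ p * (2 ^ p) ^ j := by
  have hj : (j : ℝ) ≤ 2 ^ j := by exact_mod_cast j.lt_two_pow_self.le
  have h1 : (1 : ℝ) ≤ 2 ^ j := one_le_pow₀ one_le_two
  have hM : 0 ≤ (r : ℝ) + p * |l| := by positivity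
  calc |degFallFact (j + r) l p| ≤ (|(j : ℝ) + r| + p * |l|) ^ p := abs_degFallFact_le _ _ _
    _ ≤ ((r + p * |l| + 1) * 2 ^ j) ^ p := by
        rw [abs_of_nonneg (by positivity)]
        gcongr
        nlinarith
    _ = (r + p * |l| + 1) ^ p * (2 ^ p) ^ j := by rw [mul_pow, ← pow_mul, ← pow_mul, mul_comm j]

/-- `e^{-x} ∑_{n≥1} (∑_{j=0}^{n-1} (j+r)_{p,λ}) x^n/n! = ∫_0^x φ_{p,λ}^{(r)}(t) dt`. -/
theorem exp_neg_mul_y_eq_integral (l : ℝ) (p r : ℕ) (x : ℝ) :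
    Real.exp (-x) *
      ∑' n : ℕ, (∑ j ∈ Finset.range n, degFallFact (j + r) l p) * x ^ n / n.factorial =
      ∫ t in (0 : ℝ)..x, degBell l p r t := by
  have ha := abs_degFallFact_nat_add_le l p r
  have hK : (1 : ℝ) ≤ 2 ^ p := one_le_pow₀ one_le_two
  have hderiv : ∀ t, HasDerivAt
      (fun y ↦ Real.exp (-y) * egf (fun n ↦ ∑ j ∈ Finset.range n, degFallFact (j + r) l p) y)
      (degBell l p r t) t := fun t ↦ by
    have h := hasDerivAt_exp_neg_mul_egf (abs_sum_range_le ha hK) t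
    simp only [Finset.sum_range_succ_sub_sum] at h
    exact h
  have hcont : Continuous (degBell l p r) := continuous_iff_continuousAt.mpr fun t ↦
    (hasDerivAt_exp_neg_mul_egf ha t).continuousAt
  rw [intervalIntegral.integral_eq_sub_of_hasDerivAt (fun t _ ↦ hderiv t)
    (hcont.intervalIntegrable 0 x), egf_zero]
  simp [egf]
end

section
/- For p ≥ 0, ∑_{n=1}^∞ ( ∑_{j=1}^{n} (j+r)_{p,λ} ) x^n/n! = e^x ∑_{k=1}^{p+1} ( {p+1+r brace k+r}_{r,λ} + (pλ - r) {p+r brace k+r}_{r,λ} ) x^k/k. -/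
/-!
Put `c k = {p+1+r brace k+r}_{r,λ} + (pλ - r) {p+r brace k+r}_{r,λ}` and `(y)_k = y(y-1)⋯(y-k+1)`.
Since `(y+r)_{p+1,λ} = (y+r)_{p,λ} (y+r-pλ)`, the defining expansions give
`∑ₖ c k (y)_k = y (y+r)_{p,λ}`. Because `(y+1) (y)_k = (y+1)_k (y+1-k)`, the polynomial
`Q y = ∑_{k ≥ 1} c k / k (y)_k` then satisfies `Q 0 = 0` and `Q (n+1) - Q n = (n+1+r)_{p,λ}`,
so `Q n` is the inner partial sum. Finally `∑ₙ (n)_k xⁿ/n! = xᵏ eˣ` termwise.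
-/

open Finset
open scoped Nat

theorem prod_range_cast_sub_eq_zero {R : Type*} [CommRing R] {n k : ℕ} (h : n < k) :
    ∏ i ∈ range k, ((n : R) - i) = 0 :=
  prod_eq_zero (mem_range.mpr h) (sub_self _)

theorem add_one_mul_prod_range_sub {R : Type*} [CommRing R] (y : R) (k : ℕ) :
    (y + 1) * ∏ i ∈ range k, (y - i) = (∏ i ∈ range k, (y + 1 - i)) * (y + 1 - k) := by
  rw [← prod_range_succ (fun i : ℕ => y + 1 - i), prod_range_succ']
  simp only [Nat.cast_add, Nat.cast_one, add_sub_add_right_eq_sub, Nat.cast_zero, sub_zero]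
  ring

theorem sum_Icc_eq_sum_div_mul_prod_range {K : Type*} [Field K] [CharZero K] {N : ℕ}
    {c : ℕ → K} {g : K → K}
    (h : ∀ y : ℕ, ∑ k ∈ range (N + 1), c k * ∏ i ∈ range k, ((y : K) - i) = y * g y) (n : ℕ) :
    ∑ j ∈ Icc 1 n, g j = ∑ k ∈ Icc 1 N, c k / k * ∏ i ∈ range k, ((n : K) - i) := by
  have hsplit (y : ℕ) : ∑ k ∈ range (N + 1), c k * ∏ i ∈ range k, ((y : K) - i) =
      c 0 + ∑ k ∈ Icc 1 N, c k * ∏ i ∈ range k, ((y : K) - i) := by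
    rw [Nat.range_succ_eq_Icc_zero, ← insert_Icc_add_one_left_eq_Icc N.zero_le,
      sum_insert (by simp)]
    simp
  have hvanish (d : ℕ → K) : ∑ k ∈ Icc 1 N, d k * ∏ i ∈ range k, (((0 : ℕ) : K) - i) = 0 :=
    sum_eq_zero fun k hk => by rw [prod_range_cast_sub_eq_zero (mem_Icc.mp hk).1, mul_zero]
  have hc0 : c 0 = 0 := by
    have h0 := h 0
    rwa [hsplit, hvanish, add_zero, Nat.cast_zero, zero_mul] at h0
  induction n with
  | zero => rw [hvanish]; simp
  | succ n ih =>
    have hn : ((n : K) + 1) ≠ 0 := by exact_mod_cast n.succ_ne_zero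
    rw [sum_Icc_succ_top (by omega), ih]
    apply mul_left_cancel₀ hn
    rw [mul_add, ← Nat.cast_add_one, ← h, hsplit, hc0, zero_add, mul_sum, mul_sum,
      ← sum_add_distrib]
    refine sum_congr rfl fun k hk => ?_
    have hk : (k : K) ≠ 0 := by exact_mod_cast (Nat.one_le_iff_ne_zero.mp (mem_Icc.mp hk).1)
    have := add_one_mul_prod_range_sub (n : K) k
    push_cast
    field_simp
    linear_combination c k * this

theorem hasSum_descFactorial_mul_pow_div_factorial (k : ℕ) (x : ℝ) :
    HasSum (fun n : ℕ => (n.descFactorial k : ℝ) * x ^ n / n !) (x ^ k * Real.exp x) := by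
  rw [← hasSum_nat_add_iff' k, sum_eq_zero fun i hi => by
    rw [Nat.descFactorial_eq_zero_iff_lt.mpr (mem_range.mp hi), Nat.cast_zero, zero_mul,
      zero_div], sub_zero]
  have hshift (m : ℕ) :
      ((m + k).descFactorial k : ℝ) * x ^ (m + k) / (m + k)! = x ^ k * (x ^ m / m !) := by
    rw [← Nat.factorial_mul_descFactorial (Nat.le_add_left k m), Nat.add_sub_cancel]
    push_cast
    field_simp
    ring
  simp only [hshift]
  exact (Real.exp_eq_exp_ℝ ▸ NormedSpace.expSeries_div_hasSum_exp x).mul_left _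

theorem hasSum_sum_mul_prod_range_mul_pow_div_factorial (s : Finset ℕ) (c : ℕ → ℝ) (x : ℝ) :
    HasSum (fun n : ℕ => (∑ k ∈ s, c k * ∏ i ∈ range k, ((n : ℝ) - i)) * x ^ n / n !)
      (Real.exp x * ∑ k ∈ s, c k * x ^ k) := by
  simp only [← descPochhammer_eval_eq_prod_range, descPochhammer_eval_eq_descFactorial,
    sum_mul, sum_div, mul_sum]
  refine hasSum_sum fun k _ => ?_
  simpa only [mul_div_assoc, mul_assoc, mul_comm (Real.exp x)] using
    (hasSum_descFactorial_mul_pow_div_factorial k x).mul_left (c k)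

theorem sum_mul_prod_range_eq_mul_degFallFact (l y : ℝ) (p r : ℕ) (S : ℕ → ℕ → ℝ)
    (hS : ∀ m : ℕ, degFallFact (y + r) l m =
      ∑ k ∈ range (m + 1), S m k * ∏ i ∈ range k, (y - i))
    (hSp : S p (p + 1) = 0) :
    ∑ k ∈ range (p + 2), (S (p + 1) k + (p * l - r) * S p k) * ∏ i ∈ range k, (y - i) =
      y * degFallFact (y + r) l p := by
  simp only [add_mul, sum_add_distrib, mul_assoc, ← mul_sum]
  rw [← hS, sum_range_succ _ (p + 1), hSp, zero_mul, add_zero, ← hS, degFallFact,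
    prod_range_succ, ← degFallFact]
  ring

/-- `∑_{n≥1} (∑_{j=1}^n (j+r)_{p,λ}) x^n/n!
  = e^x ∑_{k=1}^{p+1} ({p+1+r brace k+r}_{r,λ} + (pλ - r){p+r brace k+r}_{r,λ}) x^k/k`,
with the convention `{p+r brace k+r}_{r,λ} = 0` for `k > p`. -/
theorem tsum_shifted_partial_sums (l : ℝ) (p r : ℕ) (S : ℕ → ℕ → ℝ)
    (hS : ∀ (m : ℕ) (x : ℝ), degFallFact (x + r) l m =
      ∑ k ∈ Finset.range (m + 1), S m k * ∏ i ∈ Finset.range k, (x - i))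
    (hS0 : ∀ m k : ℕ, m < k → S m k = 0)
    (x : ℝ) :
    ∑' n : ℕ, (∑ j ∈ Finset.Icc 1 n, degFallFact (j + r) l p) * x ^ n / n.factorial =
      Real.exp x * ∑ k ∈ Finset.Icc 1 (p + 1),
        (S (p + 1) k + ((p : ℝ) * l - r) * S p k) * x ^ k / k := by
  have hpartial := sum_Icc_eq_sum_div_mul_prod_range (g := fun y => degFallFact (y + r) l p)
    fun y => sum_mul_prod_range_eq_mul_degFallFact l y p r S (hS · y) (hS0 p (p + 1) p.lt_succ_self)
  simp only [hpartial]
  rw [(hasSum_sum_mul_prod_range_mul_pow_div_factorial _ _ x).tsum_eq]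
  simp only [div_mul_eq_mul_div]
end

section
/- For p ≥ 0 and |x| < 1, the degenerate differential operator (x d/dx + r)_{p,λ} = (x d/dx + r)(x d/dx + r - λ)⋯(x d/dx + r - (p-1)λ) applied to 1/(1-x) equals ∑_{n=0}^∞ (n+r)_{p,λ} x^n. -/
/-- The degenerate differential operator
`(x d/dx + r)_{p,λ} = (x d/dx + r)(x d/dx + r - λ)⋯(x d/dx + r - (p-1)λ)`,
the innermost (rightmost) factor being applied first. -/
noncomputable def degOp (r l : ℝ) : ℕ → (ℝ → ℝ) → (ℝ → ℝ)
  | 0, f => f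
  | p + 1, f => degOp r l p (fun x => x * deriv f x + (r - p * l) * f x)

/-!
The operator `x d/dx + c` acts on a power series `∑ aₙ xⁿ`, inside its disc of convergence, by
multiplying the `n`-th coefficient by `n + c` (differentiate termwise). Applying the `p` factors
of the degenerate operator one at a time to the geometric series `∑ xⁿ = 1/(1-x)` therefore
multiplies its `n`-th coefficient by `(n+r)(n+r-λ)⋯(n+r-(p-1)λ) = (n+r)_{p,λ}`.
-/

open Filter Asymptotics Topology

theorem summable_natCast_mul_mul_pow {a : ℕ → ℝ} {s y : ℝ}
    (hs : Summable fun n => a n * s ^ n) (hy : |y| < |s|) :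
    Summable fun n : ℕ => n * a n * y ^ n := by
  have hs0 : s ≠ 0 := abs_pos.mp ((abs_nonneg y).trans_lt hy)
  have hq : ‖y / s‖ < 1 := by
    rwa [Real.norm_eq_abs, abs_div, div_lt_one (abs_pos.mpr hs0)]
  have hgeom : Summable fun n : ℕ => ‖(n : ℝ) * (y / s) ^ n‖ := by
    simpa using (summable_pow_mul_geometric_of_norm_lt_one 1 hq).norm
  have hsplit : (fun n : ℕ => n * a n * y ^ n) = fun n => (a n * s ^ n) * (n * (y / s) ^ n) := by
    funext n; rw [div_pow]; field_simp
  rw [hsplit]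
  refine summable_of_isBigO_nat hgeom ?_
  simpa using ((hs.tendsto_atTop_zero.isBigO_one ℝ).mul
    (isBigO_refl (fun n : ℕ => (n : ℝ) * (y / s) ^ n) atTop)).norm_right

theorem mul_natCast_mul_pow_sub_one (x : ℝ) (n : ℕ) : x * (n * x ^ (n - 1)) = n * x ^ n := by
  rcases n.eq_zero_or_pos with rfl | hn
  · simp
  · rw [mul_left_comm, mul_comm x, pow_sub_one_mul hn.ne']

theorem hasSum_deriv_of_hasSum_pow {a : ℕ → ℝ} {f : ℝ → ℝ} {ρ x : ℝ}
    (hf : ∀ y, |y| < ρ → HasSum (fun n => a n * y ^ n) (f y)) (hx : |x| < ρ) :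
    HasSum (fun n : ℕ => a n * (n * x ^ (n - 1))) (deriv f x) := by
  obtain ⟨R, hxR, hRρ⟩ := exists_between hx
  obtain ⟨s, hRs, hsρ⟩ := exists_between hRρ
  have hR : 0 < R := (abs_nonneg x).trans_lt hxR
  have hu : Summable fun n : ℕ => ‖a n * (n * R ^ (n - 1))‖ := by
    have hs : |s| < ρ := by rwa [abs_of_pos (hR.trans hRs)]
    have hRs' : |R| < |s| := by rwa [abs_of_pos hR, abs_of_pos (hR.trans hRs)]
    refine ((summable_natCast_mul_mul_pow (hf s hs).summable hRs').div_const R).norm.congr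
      fun n => ?_
    rw [mul_right_comm, ← mul_natCast_mul_pow_sub_one]
    field_simp
  have hbound : ∀ (n : ℕ), ∀ y ∈ Metric.ball (0 : ℝ) R,
      ‖a n * (n * y ^ (n - 1))‖ ≤ ‖a n * (n * R ^ (n - 1))‖ := by
    intro n y hy
    rw [mem_ball_zero_iff, Real.norm_eq_abs] at hy
    simp only [norm_mul, norm_pow, Real.norm_eq_abs, abs_of_pos hR]
    gcongr
  have hxball : x ∈ Metric.ball (0 : ℝ) R := by rwa [mem_ball_zero_iff, Real.norm_eq_abs]
  have hderiv := hasDerivAt_tsum_of_isPreconnected hu Metric.isOpen_ball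
    (convex_ball (0 : ℝ) R).isPreconnected (fun n y _ => (hasDerivAt_pow n y).const_mul (a n))
    hbound (Metric.mem_ball_self hR) (hf 0 (by simpa using (abs_nonneg x).trans_lt hx)).summable
    hxball
  have hfT : f =ᶠ[𝓝 x] fun y => ∑' n, a n * y ^ n := by
    filter_upwards [(isOpen_lt continuous_abs continuous_const).mem_nhds hx] with y hy
    exact (hf y hy).tsum_eq.symm
  rw [hfT.deriv_eq, hderiv.deriv]
  exact (Summable.of_norm_bounded hu fun n => hbound n x hxball).hasSum

theorem hasSum_mul_deriv_add_mul {a : ℕ → ℝ} {f : ℝ → ℝ} {ρ x : ℝ}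
    (hf : ∀ y, |y| < ρ → HasSum (fun n => a n * y ^ n) (f y)) (c : ℝ) (hx : |x| < ρ) :
    HasSum (fun n : ℕ => (n + c) * a n * x ^ n) (x * deriv f x + c * f x) := by
  refine (((hasSum_deriv_of_hasSum_pow hf hx).mul_left x).add ((hf x hx).mul_left c)).congr_fun
    fun n => ?_
  linear_combination a n * (mul_natCast_mul_pow_sub_one x n).symm

theorem degFallFact_succ (y l : ℝ) (m : ℕ) :
    degFallFact y l (m + 1) = degFallFact y l m * (y - m * l) :=
  Finset.prod_range_succ _ m

theorem hasSum_degOp (r l : ℝ) (p : ℕ) {a : ℕ → ℝ} {f : ℝ → ℝ} {ρ : ℝ}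
    (hf : ∀ y, |y| < ρ → HasSum (fun n => a n * y ^ n) (f y)) {x : ℝ} (hx : |x| < ρ) :
    HasSum (fun n : ℕ => degFallFact (n + r) l p * a n * x ^ n) (degOp r l p f x) := by
  induction p generalizing a f with
  | zero => simpa [degFallFact, degOp] using hf x hx
  | succ p ih =>
    rw [degOp]
    refine (ih fun y hy => hasSum_mul_deriv_add_mul hf (r - p * l) hy).congr_fun fun n => ?_
    rw [degFallFact_succ]
    ring

/-- for `|x| < 1`,
`(x d/dx + r)_{p,λ} (1/(1-x)) = ∑_{n≥0} (n+r)_{p,λ} x^n`. -/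
theorem degOp_one_div (l : ℝ) (p r : ℕ) (x : ℝ) (hx : |x| < 1) :
    HasSum (fun n : ℕ => degFallFact (n + r) l p * x ^ n)
      (degOp r l p (fun y => 1 / (1 - y)) x) := by
  have hgeom : ∀ y : ℝ, |y| < 1 → HasSum (fun n => (1 : ℕ → ℝ) n * y ^ n) (1 / (1 - y)) :=
    fun y hy => by simpa using hasSum_geometric_of_abs_lt_one hy
  simpa using hasSum_degOp r l p hgeom hx
end
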